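/- The Farey graph has vertex set the rationals together with infinity (represented as coprime pairs (p,q) with q ≥ 0, including (1,0)), with p/q and r/s adjacent iff |ps - qr| = 1. Then the Farey graph is connected. -/
import Mathlib


/-- Vertices of the Farey graph: coprime integer pairs (p, q) with q ≥ 0
(including (1,0) representing ∞), identified with ℚ ∪ {∞}. -/
def FareyVertex : Type := {v : ℤ × ℤ // Int.gcd v.1 v.2 = 1 ∧ 0 ≤ v.2}

/-- The Farey graph: p/q and r/s are adjacent iff |ps - qr| = 1. -/
def fareyGraph : SimpleGraph FareyVertex :=
  SimpleGraph.fromRel (fun v w => |v.1.1 * w.1.2 - v.1.2 * w.1.1| = 1)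

def fareyInfty : FareyVertex := ⟨(1, 0), by norm_num⟩

lemma farey_adj (v w : FareyVertex) (hne : v.1 ≠ w.1)
    (h : |v.1.1 * w.1.2 - v.1.2 * w.1.1| = 1) : fareyGraph.Adj v w := by
  refine ⟨fun hvw => hne (congrArg Subtype.val hvw), Or.inl h⟩

lemma farey_reach_infty : ∀ n : ℕ, ∀ v : FareyVertex, v.1.2 = (n : ℤ) →
    fareyGraph.Reachable v fareyInfty := by
  intro n
  induction n using Nat.strong_induction_on with
  | _ n ih =>
    intro v hv
    obtain ⟨⟨p, q⟩, hc, hq⟩ := v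
    simp only at hv hc hq
    subst hv
    match n with
    | 0 =>
      have hc' : p.natAbs = 1 := by simpa using hc
      rcases Int.natAbs_eq_iff.mp hc' with h1 | h1
      · subst h1
        exact SimpleGraph.Reachable.refl _
      · subst h1
        have h1 : fareyGraph.Adj ⟨(-1, ((0:ℕ):ℤ)), hc, hq⟩ ⟨(0,1), by norm_num⟩ := by
          refine farey_adj _ _ ?_ (by norm_num)
          intro h
          exact absurd (congrArg Prod.fst h) (by norm_num)
        have h2 : fareyGraph.Adj (⟨(0,1), by norm_num⟩ : FareyVertex) fareyInfty := by
          refine farey_adj _ fareyInfty ?_ (by simp [fareyInfty])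
          intro h
          exact absurd (congrArg Prod.fst h) (by simp [fareyInfty])
        exact h1.reachable.trans h2.reachable
    | 1 =>
      refine SimpleGraph.Adj.reachable (farey_adj _ fareyInfty ?_ ?_)
      · intro h
        exact absurd (congrArg Prod.snd h) (by simp [fareyInfty])
      · simp [fareyInfty]
    | (m + 2) =>
      set q : ℤ := ((m : ℤ) + 2) with hqdef
      have hq2 : (2 : ℤ) ≤ q := by omega
      have hcop : IsCoprime p q := by
        rw [Int.isCoprime_iff_gcd_eq_one]; exact_mod_cast hc
      obtain ⟨a, b, hab⟩ := hcop
      set a' : ℤ := a % q with ha'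
      have hq0 : (0 : ℤ) < q := by linarith
      have ha'0 : 0 ≤ a' := Int.emod_nonneg a (by linarith)
      have ha'lt : a' < q := Int.emod_lt_of_pos a hq0
      have hdvd : q ∣ p * a' - 1 := by
        have h1 : q ∣ a - a' := Int.dvd_self_sub_of_emod_eq rfl
        have h2 : p * a' - 1 = (-p) * (a - a') - b * q := by
          rw [← hab]; ring
        rw [h2]
        exact dvd_sub (h1.mul_left (-p)) (dvd_mul_left q b)
      obtain ⟨u, hu⟩ := hdvd
      have key : p * a' - q * u = 1 := by linarith [hu]
      have ha'ne : a' ≠ 0 := by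
        intro h0
        rw [h0] at key
        have hdq : q ∣ 1 := ⟨-u, by linarith⟩
        have := Int.le_of_dvd one_pos hdq
        linarith
      have hgcd : Int.gcd u a' = 1 := by
        rw [Int.gcd_comm, ← Int.isCoprime_iff_gcd_eq_one]
        exact ⟨p, -q, by linarith⟩
      have hadj : fareyGraph.Adj ⟨(p, q), hc, hq⟩ ⟨(u, a'), hgcd, ha'0⟩ := by
        refine farey_adj _ _ ?_ ?_
        · intro h
          have h2 : q = a' := congrArg Prod.snd h
          linarith
        · show |p * a' - q * u| = 1
          rw [key]; exact abs_one
      refine hadj.reachable.trans (ih a'.toNat ?_ ⟨(u, a'), hgcd, ha'0⟩ ?_)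
      · omega
      · show a' = (a'.toNat : ℤ)
        omega

/-- The Farey graph is connected. -/
theorem fareyGraph_connected : fareyGraph.Connected := by
  rw [SimpleGraph.connected_iff]
  refine ⟨fun v w => ?_, ⟨fareyInfty⟩⟩
  have hv := farey_reach_infty v.1.2.toNat v (by have := v.2.2; omega)
  have hw := farey_reach_infty w.1.2.toNat w (by have := w.2.2; omega)
  exact hv.trans hw.symm
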